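/- arXiv:0809.1125 — 3 statements merged into one kernel-verified Lean document; each statement's English description precedes it below -/
import Mathlib

section
/- The Eisenstein series E_{p-1} of weight p-1 and level 1 has q-expansion congruent to 1 modulo p, for any prime p ≥ 5. In particular, E_4(q) ≡ 1 (mod 5). -/
/-!
By von Staudt–Clausen, `B_{p-1} + ∑ 1/q` is an integer, the sum running over the primes `q`
with `q - 1 ∣ p - 1`. Every `1/q` with `q ≠ p` is a `p`-adic unit, so `B_{p-1} + 1/p` is
`p`-integral and `v_p(B_{p-1}) = -1`. Hence `2(p-1)/B_{p-1}` is divisible by `p`, while the divisor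
sum `σ_{p-2}(n)` is a positive integer.
-/

open Finset WithZero

section

variable {p : ℕ} [hp : Fact p.Prime]

lemma Rat.padicValuation_of_ne_zero {x : ℚ} (hx : x ≠ 0) :
    Rat.padicValuation p x = exp (-padicValRat p x) :=
  if_neg hx

lemma Rat.inv_natCast_mem_padicValuation_integer {m : ℕ} (hm : ¬ p ∣ m) :
    (m : ℚ)⁻¹ ∈ (Rat.padicValuation p).integer := by
  rw [Valuation.mem_integer_iff, Rat.padicValuation_le_one_iff, Rat.inv_natCast_den]
  split_ifs <;> simp_all

lemma bernoulli_sub_one_add_inv_mem_padicValuation_integer (hp2 : p ≠ 2) :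
    bernoulli (p - 1) + (p : ℚ)⁻¹ ∈ (Rat.padicValuation p).integer := by
  obtain ⟨k, hk⟩ := hp.out.even_sub_one hp2
  replace hk : 2 * k = p - 1 := by omega
  obtain ⟨N, hN⟩ := Bernoulli.vonStaudt_clausen k
  set S := {q ∈ range (2 * k + 2) | q.Prime ∧ q - 1 ∣ 2 * k}
  have hpS : p ∈ S := mem_filter.mpr ⟨mem_range.mpr (by omega), hp.out, hk ▸ dvd_rfl⟩
  rw [← add_sum_erase S _ hpS, hk, ← add_assoc, one_div] at hN
  rw [eq_sub_of_add_eq hN.symm]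
  refine sub_mem (intCast_mem _ N) (sum_mem fun q hq ↦ ?_)
  obtain ⟨hqp, hq⟩ := mem_erase.mp hq
  rw [one_div]
  exact Rat.inv_natCast_mem_padicValuation_integer
    fun h ↦ hqp ((Nat.prime_dvd_prime_iff_eq hp.out (mem_filter.mp hq).2.1).mp h).symm

lemma Rat.padicValuation_bernoulli_sub_one (hp2 : p ≠ 2) :
    Rat.padicValuation p (bernoulli (p - 1)) = exp 1 := by
  have hinv : Rat.padicValuation p (p : ℚ)⁻¹ = exp 1 := by simp
  have hlt : Rat.padicValuation p (bernoulli (p - 1) + (p : ℚ)⁻¹) <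
      Rat.padicValuation p (p : ℚ)⁻¹ := by
    rw [hinv]
    exact (bernoulli_sub_one_add_inv_mem_padicValuation_integer hp2).trans_lt
      (by simpa using exp_lt_exp.mpr (zero_lt_one' ℤ))
  rw [← add_sub_cancel_right (bernoulli (p - 1)) (p : ℚ)⁻¹,
    Valuation.map_sub_eq_of_lt_right _ hlt, hinv]

theorem padicValRat_bernoulli_sub_one (hp2 : p ≠ 2) :
    padicValRat p (bernoulli (p - 1)) = -1 := by
  have hv := Rat.padicValuation_bernoulli_sub_one hp2
  have hB : bernoulli (p - 1) ≠ 0 := by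
    rintro h
    simp only [h, map_zero] at hv
    exact exp_ne_zero hv.symm
  rw [Rat.padicValuation_of_ne_zero hB, exp_injective.eq_iff] at hv
  omega

end

open ArithmeticFunction in
open scoped ArithmeticFunction.sigma in
theorem eisenstein_qexpansion_congruent_one_mod_p :
    ∀ p : ℕ, p.Prime → 5 ≤ p → ∀ n : ℕ, 1 ≤ n →
      1 ≤ padicValRat p
        ((2 * ((p : ℚ) - 1) / bernoulli' (p - 1)) *
          (∑ d ∈ Nat.divisors n, (d : ℚ) ^ (p - 2))) := by
  intro p hp hp5 n hn
  have : Fact p.Prime := ⟨hp⟩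
  have hB := padicValRat_bernoulli_sub_one (p := p) (by omega)
  have hB0 : bernoulli (p - 1) ≠ 0 := by rintro h; simp [h] at hB
  have hnum : 2 * ((p : ℚ) - 1) = ((2 * (p - 1) : ℕ) : ℚ) := by push_cast [hp.one_le]; ring
  have hnum0 : ((2 * (p - 1) : ℕ) : ℚ) ≠ 0 := by norm_cast; omega
  have hσ : ∑ d ∈ n.divisors, (d : ℚ) ^ (p - 2) = (σ (p - 2) n : ℕ) := by simp [sigma_apply]
  have hσ0 : ((σ (p - 2) n : ℕ) : ℚ) ≠ 0 := by exact_mod_cast (sigma_pos _ _ (by omega)).ne'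
  rw [← bernoulli_eq_bernoulli'_of_ne_one (by omega), hnum, hσ,
    padicValRat.mul (div_ne_zero hnum0 hB0) hσ0, padicValRat.div hnum0 hB0, hB,
    padicValRat.of_nat, padicValRat.of_nat]
  omega
end

section
/- Let p ≥ 5, k ≥ 1, and j ≡ 0 (mod p^{k-1}). If f_1 and f_2 are level-1 modular forms over Z/p^k of weights w and w + j(p-1) respectively with equal q-expansions mod p^k, then f_2 = E_{p-1}^j · f_1 as modular forms mod p^k; conversely multiplication by E_{p-1}^j preserves q-expansions mod p^k. -/
open PowerSeries

/-!
Since `p ∣ E - 1`, the binomial theorem gives `pᵏ ∣ E ^ p^(k-1) - 1`, hence `pᵏ` divides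
`E ^ j - 1` for every multiple `j` of `p^(k-1)`. Multiplying by `f₁` gives the converse
congruence `E ^ j f₁ ≡ f₁`, and combining it with `f₂ ≡ f₁` gives `f₂ ≡ E ^ j f₁`.
-/

theorem PowerSeries.C_dvd_iff_forall_dvd_coeff {R : Type*} [Semiring R] (a : R) (f : R⟦X⟧) :
    C a ∣ f ↔ ∀ n, a ∣ coeff n f := by
  constructor
  · rintro ⟨g, rfl⟩ n
    rw [coeff_C_mul]
    exact dvd_mul_right a _
  · intro h
    refine ⟨mk fun n => (h n).choose, ?_⟩
    ext n
    rw [coeff_C_mul, coeff_mk]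
    exact (h n).choose_spec

theorem natCast_pow_succ_dvd_pow_mul_sub_one {R : Type*} [CommRing R] {p : ℕ} {x : R}
    (h : (p : R) ∣ x - 1) (k m : ℕ) : (p : R) ^ (k + 1) ∣ x ^ (p ^ k * m) - 1 := by
  have hpk : (p : R) ^ (k + 1) ∣ x ^ p ^ k - 1 := by
    simpa only [one_pow] using dvd_sub_pow_of_dvd_sub h k
  have hm : x ^ p ^ k - 1 ∣ x ^ (p ^ k * m) - 1 := by
    simpa only [one_pow, ← pow_mul] using sub_dvd_pow_sub_pow (x ^ p ^ k) 1 m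
  exact hpk.trans hm

theorem PowerSeries.natCast_pow_succ_dvd_coeff_pow_mul_mul_sub {R : Type*} [CommRing R]
    {p : ℕ} {E : R⟦X⟧} (hE : ∀ n, (p : R) ∣ coeff n (E - 1)) (k m : ℕ) (f : R⟦X⟧) (n : ℕ) :
    (p : R) ^ (k + 1) ∣ coeff n (E ^ (p ^ k * m) * f - f) := by
  have hEp : (p : R⟦X⟧) ∣ E - 1 := by
    rw [← map_natCast C]
    exact (C_dvd_iff_forall_dvd_coeff _ _).2 hE
  have hEf : C ((p : R) ^ (k + 1)) ∣ E ^ (p ^ k * m) * f - f := by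
    rw [map_pow, map_natCast, ← sub_one_mul]
    exact (natCast_pow_succ_dvd_pow_mul_sub_one hEp k m).mul_right f
  exact (C_dvd_iff_forall_dvd_coeff _ _).1 hEf n

theorem serre_congruence_eisenstein_multiplication_general
    (p : ℕ) [Fact p.Prime] (k j : ℕ) (hk : 1 ≤ k)
    (hj : p ^ (k - 1) ∣ j)
    (E : PowerSeries ℤ_[p])
    (hE1 : ∀ n, (p : ℤ_[p]) ∣ coeff n (E - 1))
    (f₁ f₂ : PowerSeries ℤ_[p])
    (hcong : ∀ n, (p : ℤ_[p]) ^ k ∣ coeff n (f₂ - f₁)) :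
    (∀ n, (p : ℤ_[p]) ^ k ∣ coeff n (f₂ - E ^ j * f₁)) ∧
    (∀ n, (p : ℤ_[p]) ^ k ∣ coeff n (E ^ j * f₁ - f₁)) := by
  obtain ⟨k, rfl⟩ : ∃ k', k = k' + 1 := ⟨k - 1, by omega⟩
  obtain ⟨m, rfl⟩ := hj
  have hEf := natCast_pow_succ_dvd_coeff_pow_mul_mul_sub hE1 k m f₁
  refine ⟨fun n => ?_, hEf⟩
  have h := dvd_sub (hcong n) (hEf n)
  rwa [← map_sub, sub_sub_sub_cancel_right] at h

theorem serre_congruence_eisenstein_multiplication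
    (p : ℕ) [Fact p.Prime] (h5 : 5 ≤ p) (k j w : ℕ) (hk : 1 ≤ k)
    (hj : p ^ (k - 1) ∣ j)
    (M : ℕ → Submodule ℤ_[p] (PowerSeries ℤ_[p]))
    (hmul : ∀ a b f g, f ∈ M a → g ∈ M b → f * g ∈ M (a + b))
    (E : PowerSeries ℤ_[p]) (hE : E ∈ M (p - 1))
    (hE1 : ∀ n, (p : ℤ_[p]) ∣ coeff n (E - 1))
    (f₁ f₂ : PowerSeries ℤ_[p]) (hf₁ : f₁ ∈ M w) (hf₂ : f₂ ∈ M (w + j * (p - 1)))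
    (hcong : ∀ n, (p : ℤ_[p]) ^ k ∣ coeff n (f₂ - f₁)) :
    (∀ n, (p : ℤ_[p]) ^ k ∣ coeff n (f₂ - E ^ j * f₁)) ∧
    (∀ n, (p : ℤ_[p]) ^ k ∣ coeff n (E ^ j * f₁ - f₁)) :=
  serre_congruence_eisenstein_multiplication_general p k j hk hj E hE1 f₁ f₂ hcong
end

section
/- The coefficient of q^n in Δ^{50} is divisible by 25 unless n ≡ 0 (mod 5), and Δ^{50} ≡ q^50 + 10q^55 + 15q^60 + 5q^65 + 5q^70 + 12q^75 (mod 25) up to order q^80. -/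
open PowerSeries

/-!
Mod 5, Frobenius gives `Δ^10 ≡ Δ(q^5)^2`, and raising to the fifth power lifts this to
`Δ^50 ≡ Δ(q^5)^10 (mod 25)`. Hence the coefficients of `Δ^50` off multiples of `5` vanish mod `25`,
and the coefficient of `q^(5j)` is that of `q^j` in `Δ^10 = q^10 ∏ (1 - q^n)^240`. For `j ≤ 15` only
the first six coefficients of `∏ (1 - q^n)^240` matter; modulo `q^6` Euler's product is
`1 - q - q^2 + q^5`, and the binomial theorem, truncated at the sixth power, gives them exactly.
-/

open Finset

theorem add_one_pow_eq_sum_range_of_pow_eq_zero {R : Type*} [CommSemiring R] {w : R} {n m : ℕ}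
    (hw : w ^ n = 0) (hnm : n ≤ m + 1) :
    (w + 1) ^ m = ∑ k ∈ range n, w ^ k * m.choose k := by
  rw [add_pow]
  simp only [one_pow, mul_one]
  symm
  apply sum_subset (range_subset_range.2 hnm)
  intro k _ hk
  rw [pow_eq_zero_of_le (not_lt.1 (mem_range.not.1 hk)) hw, zero_mul]

section PowSixEqZero

variable {R : Type*} [CommRing R] {x : R}

def eulerProdPow240Trunc (x : R) : R :=
  1 - 240 * x + 28440 * x ^ 2 - 2217920 * x ^ 3 + 128013180 * x ^ 4 - 5830632288 * x ^ 5

theorem prod_Icc_one_sub_pow_of_pow_six_eq_zero (hx : x ^ 6 = 0) {N : ℕ} (hN : 5 ≤ N) :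
    ∏ n ∈ Icc 1 N, (1 - x ^ n) = 1 - x - x ^ 2 + x ^ 5 := by
  have hx' : ∀ n, 6 ≤ n → x ^ n = 0 := fun n hn => pow_eq_zero_of_le hn hx
  have htail : ∏ n ∈ Ico 6 (N + 1), (1 - x ^ n) = 1 :=
    prod_eq_one fun n hn => by rw [hx' n (mem_Ico.1 hn).1, sub_zero]
  rw [← Ico_add_one_right_eq_Icc, ← prod_Ico_consecutive _ (by norm_num : 1 ≤ 6) (by omega),
    htail, mul_one]
  simp only [prod_Ico_succ_top, Nat.one_le_ofNat, Nat.Ico_succ_singleton, prod_singleton, pow_one]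
  ring_nf
  simp (disch := norm_num) only [hx', add_zero, sub_zero]

theorem prod_Icc_one_sub_pow_pow_240_of_pow_six_eq_zero (hx : x ^ 6 = 0) {N : ℕ} (hN : 5 ≤ N) :
    ∏ n ∈ Icc 1 N, (1 - x ^ n) ^ 240 = eulerProdPow240Trunc x := by
  have hx' : ∀ n, 6 ≤ n → x ^ n = 0 := fun n hn => pow_eq_zero_of_le hn hx
  have hw : (-x - x ^ 2 + x ^ 5) ^ 6 = 0 := by
    rw [show -x - x ^ 2 + x ^ 5 = x * (-1 - x + x ^ 4) by ring, mul_pow, hx, zero_mul]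
  rw [prod_pow, prod_Icc_one_sub_pow_of_pow_six_eq_zero hx hN,
    show 1 - x - x ^ 2 + x ^ 5 = (-x - x ^ 2 + x ^ 5) + 1 by ring,
    add_one_pow_eq_sum_range_of_pow_eq_zero hw (by norm_num), eulerProdPow240Trunc]
  simp only [sum_range_succ, sum_range_zero]
  norm_num [Nat.choose_eq_descFactorial_div_factorial]
  ring_nf
  simp (disch := norm_num) only [hx', zero_mul, add_zero, sub_zero]

end PowSixEqZero

namespace PowerSeries

@[simp]
theorem coeff_ofNat_mul {R : Type*} [Semiring R] (a : ℕ) [a.AtLeastTwo] (n : ℕ) (f : R⟦X⟧) :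
    coeff n (ofNat(a) * f) = ofNat(a) * coeff n f := by
  rw [← map_ofNat C a, coeff_C_mul]

theorem intCast_dvd_iff {m : ℤ} {f : ℤ⟦X⟧} : (m : ℤ⟦X⟧) ∣ f ↔ ∀ n, m ∣ coeff n f := by
  rw [← map_intCast (C (R := ℤ)), Int.cast_id]
  refine ⟨fun ⟨g, hg⟩ n => ⟨coeff n g, by rw [hg, coeff_C_mul]⟩, fun h => ?_⟩
  refine ⟨mk fun n => coeff n f / m, ext fun n => ?_⟩
  rw [coeff_C_mul, coeff_mk, Int.mul_ediv_cancel' (h n)]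

theorem natCast_dvd_pow_sub_expand (p : ℕ) [hp : Fact p.Prime] (f : ℤ⟦X⟧) :
    (p : ℤ⟦X⟧) ∣ f ^ p - expand p hp.out.ne_zero f := by
  have hmap : map (Int.castRingHom (ZMod p)) (f ^ p - expand p hp.out.ne_zero f) = 0 := by
    rw [map_sub, map_pow, map_expand, ← MvPowerSeries.map_frobenius_expand p hp.out.ne_zero,
      ZMod.frobenius_zmod, MvPowerSeries.map_id]
    exact sub_self _
  rw [← Int.cast_natCast, intCast_dvd_iff]
  intro n
  rw [← ZMod.intCast_zmod_eq_zero_iff_dvd, ← eq_intCast (Int.castRingHom (ZMod p)), ← coeff_map,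
    hmap, map_zero]

theorem natCast_sq_dvd_pow_sq_sub_expand_pow (p : ℕ) [hp : Fact p.Prime] (f : ℤ⟦X⟧) :
    (p : ℤ⟦X⟧) ^ 2 ∣ f ^ p ^ 2 - expand p hp.out.ne_zero (f ^ p) := by
  simpa [← pow_mul, sq] using dvd_sub_pow_of_dvd_sub (natCast_dvd_pow_sub_expand p f) 1

theorem X_pow_six_dvd_prod_one_sub_X_pow_pow_240_sub {R : Type*} [CommRing R] {N : ℕ}
    (hN : 5 ≤ N) :
    (X ^ 6 : R⟦X⟧) ∣ ∏ n ∈ Icc 1 N, (1 - X ^ n) ^ 240 - eulerProdPow240Trunc X := by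
  rw [← Ideal.mem_span_singleton, ← Ideal.Quotient.eq, eulerProdPow240Trunc]
  simp only [map_prod, map_pow, map_sub, map_add, map_one, map_mul, map_ofNat]
  refine prod_Icc_one_sub_pow_pow_240_of_pow_six_eq_zero ?_ hN
  rw [← map_pow, Ideal.Quotient.eq_zero_iff_mem, Ideal.mem_span_singleton]

theorem X_pow_sixteen_dvd_pow_ten_sub {Δ : ℤ⟦X⟧} {N : ℕ} (hN : 14 ≤ N)
    (hΔ : ∀ m ≤ N + 1, coeff m Δ = coeff m (X * ∏ n ∈ Icc 1 N, (1 - X ^ n) ^ 24)) :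
    (X ^ 16 : ℤ⟦X⟧) ∣ Δ ^ 10 - X ^ 10 * eulerProdPow240Trunc X := by
  set G : ℤ⟦X⟧ := X * ∏ n ∈ Icc 1 N, (1 - X ^ n) ^ 24
  have hΔG : (X ^ 16 : ℤ⟦X⟧) ∣ Δ ^ 10 - G ^ 10 :=
    (X_pow_dvd_iff.2 fun m hm => by rw [map_sub, hΔ m (by omega), sub_self]).trans
      (sub_dvd_pow_sub_pow _ _ _)
  have hG : (X ^ 16 : ℤ⟦X⟧) ∣ G ^ 10 - X ^ 10 * eulerProdPow240Trunc X := by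
    rw [mul_pow, ← prod_pow, ← mul_sub, show 16 = 10 + 6 from rfl, pow_add]
    simp only [← pow_mul]
    exact mul_dvd_mul_left _ (X_pow_six_dvd_prod_one_sub_X_pow_pow_240_sub (by omega))
  simpa only [sub_add_sub_cancel] using dvd_add hΔG hG

end PowerSeries

theorem delta_fifty_qexpansion_mod_twentyfive (Δ : PowerSeries ℤ)
    (hΔ : ∀ N : ℕ, ∀ m ≤ N + 1,
      coeff m Δ = coeff m (X * ∏ n ∈ Finset.Icc 1 N, (1 - X ^ n) ^ 24)) :
    (∀ n : ℕ, ¬ (5 ∣ n) → (25 : ℤ) ∣ coeff n (Δ ^ 50)) ∧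
    (∀ n < 80,
      coeff n (Δ ^ 50) ≡
        (if n = 50 then 1 else if n = 55 then 10 else if n = 60 then 15 else
         if n = 65 then 5 else if n = 70 then 5 else if n = 75 then 12 else 0)
        [ZMOD 25]) := by
  have h25 : ∀ n, (25 : ℤ) ∣ coeff n (Δ ^ 50) - coeff n (expand 5 (by norm_num) (Δ ^ 10)) := by
    have : Fact (Nat.Prime 5) := ⟨by norm_num⟩
    have h := natCast_sq_dvd_pow_sq_sub_expand_pow 5 (Δ ^ 2)
    rw [← pow_mul, ← pow_mul, ← Nat.cast_pow, ← Int.cast_natCast, intCast_dvd_iff] at h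
    simpa using h
  have h10 : ∀ j < 16, coeff j (Δ ^ 10) = coeff j (X ^ 10 * eulerProdPow240Trunc X) := by
    intro j hj
    rw [← sub_eq_zero, ← map_sub]
    exact X_pow_dvd_iff.1 (X_pow_sixteen_dvd_pow_ten_sub (by norm_num) (hΔ 15)) j hj
  refine ⟨fun n hn => ?_, fun n hn => ?_⟩
  · simpa only [coeff_expand_of_not_dvd _ _ _ hn, sub_zero] using h25 n
  by_cases hn5 : 5 ∣ n
  · obtain ⟨j, rfl⟩ := hn5
    have h := h25 (5 * j)
    rw [coeff_expand_mul, h10 j (by omega)] at h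
    refine (Int.modEq_iff_dvd.2 h).symm.trans ?_
    have hj : j < 16 := by omega
    interval_cases j <;> simp [eulerProdPow240Trunc, coeff_X_pow_mul', coeff_X_pow, coeff_X] <;>
      decide
  · have h := h25 n
    rw [coeff_expand_of_not_dvd _ _ _ hn5, sub_zero] at h
    split_ifs <;> first | exact Int.modEq_zero_iff_dvd.2 h | omega
end
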